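/- Let α, β, γ, ε be real numbers satisfying the Fuchsian condition 1 + α + β = γ + 2ε, and suppose γ < 3 and γ is not such that (3−γ)/2 is a nonpositive integer. Define w(z) = z^(1−γ) · Σ_{k=0}^∞ [ (ε − α/2)_k (ε − β/2)_k / ( ((3−γ)/2)_k k! ) ] z^(2k), where (x)_k is the ascending Pochhammer symbol (the series converges for |z| < 1). Then for every z ∈ (0,1), w satisfies the general Heun equation with a = −1, q = 0, δ = ε: w''(z) + ( γ/z + ε/(z−1) + ε/(z+1) ) w'(z) + αβ z/( z(z−1)(z+1) ) w(z) = 0. -/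

import Mathlib

/-!
With `a = ε - α/2`, `b = ε - β/2`, `c = (3 - γ)/2` we have `w(z) = z^(1-γ) F(z²)` for
`F = ₂F₁(a, b; c; ·)`. The Fuchsian condition gives `a + b + 1 = c + ε` and
`ab = ε(1-γ)/2 + αβ/4`, and then the Heun operator applied to `w` at `z` is
`-4 z^(1-γ) / (z² - 1)` times Gauss's hypergeometric operator applied to `F` at `z²`.
Gauss's equation for `F` holds coefficientwise in its Euler form
`θ(θ + c - 1) F = t (θ + a)(θ + b) F`, `θ = t d/dt`, where it is the Pochhammer recurrence.
-/

open Filter Topology FormalMultilinearSeries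
open scoped NNReal ENNReal

theorem summable_pow_mul_abs_mul_pow_of_lt_radius {c : ℕ → ℝ} {r : ℝ≥0}
    (hr : (r : ℝ≥0∞) < (ofScalars ℝ c).radius) (k : ℕ) :
    Summable fun n : ℕ => (n : ℝ) ^ k * |c n| * r ^ n := by
  obtain ⟨r', hrr', hr'⟩ := ENNReal.lt_iff_exists_nnreal_btwn.1 hr
  obtain ⟨C, -, hC⟩ := (ofScalars ℝ c).norm_mul_pow_le_of_lt_radius hr'
  have hr'0 : (0 : ℝ) < r' := r.2.trans_lt (by exact_mod_cast hrr')
  have hq : ‖(r : ℝ) / r'‖ < 1 := by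
    rw [Real.norm_of_nonneg (by positivity), div_lt_one hr'0]
    exact_mod_cast hrr'
  refine .of_nonneg_of_le (fun n => by positivity) (fun n => ?_)
    ((summable_pow_mul_geometric_of_norm_lt_one k hq).mul_left C)
  have hn : |c n| * r' ^ n ≤ C := by simpa [ofScalars_norm] using hC n
  calc (n : ℝ) ^ k * |c n| * r ^ n = (n : ℝ) ^ k * (|c n| * r' ^ n) * ((r : ℝ) / r') ^ n := by
        rw [div_pow]; field_simp
    _ ≤ (n : ℝ) ^ k * C * ((r : ℝ) / r') ^ n := by gcongr
    _ = C * ((n : ℝ) ^ k * ((r : ℝ) / r') ^ n) := by ring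

/-- The derivative is written as `θf / x`, where `θ = x d/dx` multiplies the `n`-th coefficient
by `n`. -/
theorem hasDerivAt_tsum_mul_pow {c : ℕ → ℝ} {r x : ℝ}
    (hc : Summable fun n : ℕ => n * |c n| * r ^ n) (hx : |x| < r) (hx0 : x ≠ 0) :
    HasDerivAt (fun y => ∑' n, c n * y ^ n) ((∑' n, n * c n * x ^ n) / x) x := by
  have hr : 0 < r := (abs_nonneg x).trans_lt hx
  have htermwise := hasDerivAt_tsum_of_isPreconnected (hc.div_const r) isOpen_Ioo
    (convex_Ioo (-r) r).isPreconnected (g := fun n y => c n * y ^ n)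
    (g' := fun n y => c n * (n * y ^ (n - 1)))
    (fun n y _ => (hasDerivAt_pow n y).const_mul (c n)) (fun n y hy => ?_)
    (Set.mem_Ioo.2 ⟨neg_lt_zero.2 hr, hr⟩) ?_ (abs_lt.1 hx)
  · refine htermwise.congr_deriv ?_
    rw [eq_div_iff hx0, ← tsum_mul_right]
    refine tsum_congr fun n => ?_
    rcases n with _ | n
    · simp
    · simp only [Nat.add_sub_cancel, pow_succ]
      ring
  · rcases n with _ | n
    · simp
    rw [Nat.add_sub_cancel, norm_mul, norm_mul, Real.norm_eq_abs, Real.norm_natCast, norm_pow,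
      pow_succ, mul_div_assoc, mul_div_cancel_right₀ _ hr.ne']
    have : ‖y‖ ^ n ≤ r ^ n := pow_le_pow_left₀ (norm_nonneg y) (abs_lt.2 hy).le n
    calc |c (n + 1)| * (((n + 1 : ℕ) : ℝ) * ‖y‖ ^ n)
        = ((n + 1 : ℕ) : ℝ) * |c (n + 1)| * ‖y‖ ^ n := by ring
      _ ≤ _ := by gcongr
  · exact (hasSum_single 0 fun n hn => by simp [hn]).summable

theorem deriv_deriv_tsum_mul_pow {c : ℕ → ℝ} {r x : ℝ}
    (hc : Summable fun n : ℕ => (n : ℝ) ^ 2 * |c n| * r ^ n) (hx : |x| < r) (hx0 : x ≠ 0) :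
    deriv (deriv fun y => ∑' n, c n * y ^ n) x =
      (∑' n, n * (n * c n) * x ^ n - ∑' n, n * c n * x ^ n) / x ^ 2 := by
  have hr : 0 ≤ r := (abs_nonneg x).trans hx.le
  have hc₁ : Summable fun n : ℕ => n * |c n| * r ^ n := by
    refine hc.of_nonneg_of_le (fun n => by positivity) fun n => ?_
    have : (n : ℝ) ≤ (n : ℝ) ^ 2 := by
      rcases n with _ | n
      · simp
      · exact le_self_pow₀ (by simp) two_ne_zero
    gcongr
  have hc₂ : Summable fun n : ℕ => n * |n * c n| * r ^ n :=
    hc.congr fun n => by rw [abs_mul (n : ℝ), Nat.abs_cast]; ring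
  have hderiv : deriv (fun y => ∑' n, c n * y ^ n) =ᶠ[𝓝 x]
      fun y => (∑' n, n * c n * y ^ n) / y := by
    have hopen : IsOpen {y : ℝ | y ≠ 0 ∧ |y| < r} :=
      isOpen_ne.inter (isOpen_lt continuous_abs continuous_const)
    filter_upwards [hopen.mem_nhds ⟨hx0, hx⟩] with y hy
    exact (hasDerivAt_tsum_mul_pow hc₁ hy.2 hy.1).deriv
  rw [hderiv.deriv_eq, ((hasDerivAt_tsum_mul_pow hc₂ hx hx0).fun_div (hasDerivAt_id' x) hx0).deriv]
  field_simp

section Hypergeometric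

theorem ordinaryHypergeometricCoefficient_succ_mul {𝕂 : Type*} [Field 𝕂] [CharZero 𝕂]
    {a b c : 𝕂} (hc : ∀ m : ℕ, c ≠ -(m : 𝕂)) (n : ℕ) :
    ordinaryHypergeometricCoefficient a b c (n + 1) * ((n + 1) * (c + n)) =
      ordinaryHypergeometricCoefficient a b c n * ((a + n) * (b + n)) := by
  have hcn : c + n ≠ 0 := fun h => hc n (eq_neg_of_add_eq_zero_left h)
  have hpoch : (ascPochhammer 𝕂 n).eval c ≠ 0 := by
    rw [Ne, ascPochhammer_eval_eq_zero_iff]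
    rintro ⟨k, -, hk⟩
    exact hc k (by rw [hk, neg_neg])
  simp only [ordinaryHypergeometricCoefficient, ascPochhammer_succ_eval, Nat.factorial_succ]
  push_cast
  field_simp

theorem ordinaryHypergeometric_sq_eq_tsum {𝕂 : Type*} [Field 𝕂] [TopologicalSpace 𝕂]
    [IsTopologicalRing 𝕂] (a b c x : 𝕂) :
    ₂F₁ a b c (x ^ 2) = ∑' k : ℕ, ((ascPochhammer 𝕂 k).eval a * (ascPochhammer 𝕂 k).eval b)
      / ((ascPochhammer 𝕂 k).eval c * (k.factorial : 𝕂)) * x ^ (2 * k) := by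
  rw [ordinaryHypergeometric_eq_tsum]
  refine tsum_congr fun k => ?_
  rw [smul_eq_mul, pow_mul]
  ring

variable {a b c : ℝ}

/-- If `a` or `b` is a nonpositive integer the series is a polynomial; otherwise its radius is
`1`. -/
theorem one_le_radius_ordinaryHypergeometricSeries (hc : ∀ m : ℕ, c ≠ -(m : ℝ)) :
    1 ≤ (ordinaryHypergeometricSeries ℝ a b c).radius := by
  by_cases ha : ∃ m : ℕ, a = -(m : ℝ)
  · obtain ⟨m, rfl⟩ := ha
    simp [ordinaryHypergeometric_radius_top_of_neg_nat₁]
  by_cases hb : ∃ m : ℕ, b = -(m : ℝ)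
  · obtain ⟨m, rfl⟩ := hb
    simp [ordinaryHypergeometric_radius_top_of_neg_nat₂]
  push Not at ha hb
  refine (ordinaryHypergeometricSeries_radius_eq_one ℝ a b c fun m => ⟨?_, ?_, ?_⟩).ge <;>
    intro h
  · exact ha m (by rw [h, neg_neg])
  · exact hb m (by rw [h, neg_neg])
  · exact hc m (by rw [h, neg_neg])

theorem analyticAt_ordinaryHypergeometric (hc : ∀ m : ℕ, c ≠ -(m : ℝ)) {t : ℝ} (ht : |t| < 1) :
    AnalyticAt ℝ (₂F₁ a b c) t := by
  have hrad := one_le_radius_ordinaryHypergeometricSeries (a := a) (b := b) hc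
  refine ((ordinaryHypergeometricSeries ℝ a b c).hasFPowerSeriesOnBall
    (zero_lt_one.trans_le hrad)).analyticAt_of_mem ?_
  rw [Metric.mem_eball, edist_zero_right, enorm_eq_nnnorm]
  exact (ENNReal.coe_lt_one_iff.2 (by simpa [← NNReal.coe_lt_coe] using ht)).trans_le hrad

/-- Gauss's equation in Euler form, `θ(θ + c - 1) F = t (θ + a)(θ + b) F`, with `Sₖ = θᵏ F`. -/
theorem ordinaryHypergeometric_euler_identity (hc : ∀ m : ℕ, c ≠ -(m : ℝ)) {t S₀ S₁ S₂ : ℝ}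
    (h₀ : HasSum (fun n : ℕ => ordinaryHypergeometricCoefficient a b c n * t ^ n) S₀)
    (h₁ : HasSum (fun n : ℕ => n * ordinaryHypergeometricCoefficient a b c n * t ^ n) S₁)
    (h₂ : HasSum (fun n : ℕ => n * (n * ordinaryHypergeometricCoefficient a b c n) * t ^ n) S₂) :
    S₂ + (c - 1) * S₁ = t * (S₂ + (a + b) * S₁ + a * b * S₀) := by
  have hrhs := ((h₂.add (h₁.mul_left (a + b))).add (h₀.mul_left (a * b))).mul_left t
  have hlhs : HasSum (fun n : ℕ => n * (n + c - 1) * ordinaryHypergeometricCoefficient a b c n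
      * t ^ n) (t * (S₂ + (a + b) * S₁ + a * b * S₀)) := by
    rw [← hasSum_nat_add_iff' 1]
    simp only [Finset.range_one, Finset.sum_singleton, CharP.cast_eq_zero, zero_mul, sub_zero]
    refine hrhs.congr_fun fun n => ?_
    have hrec := ordinaryHypergeometricCoefficient_succ_mul (a := a) (b := b) hc n
    push_cast
    linear_combination t ^ (n + 1) * hrec
  exact (h₂.add (h₁.mul_left (c - 1))).unique (hlhs.congr_fun fun n => by ring)

theorem ordinaryHypergeometric_ode (hc : ∀ m : ℕ, c ≠ -(m : ℝ)) {t : ℝ} (ht0 : t ≠ 0)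
    (ht : |t| < 1) :
    t * (1 - t) * deriv (deriv (₂F₁ a b c)) t + (c - (a + b + 1) * t) * deriv (₂F₁ a b c) t
      - a * b * ₂F₁ a b c t = 0 := by
  set C := ordinaryHypergeometricCoefficient a b c
  have hF : ₂F₁ a b c = fun y => ∑' n, C n * y ^ n := by
    simp only [ordinaryHypergeometric_eq_tsum, smul_eq_mul]
    rfl
  obtain ⟨r, htr, hr1⟩ := exists_between ht
  have hsum (k : ℕ) : Summable fun n : ℕ => (n : ℝ) ^ k * |C n| * r ^ n := by
    lift r to ℝ≥0 using (abs_nonneg t).trans htr.le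
    refine summable_pow_mul_abs_mul_pow_of_lt_radius ?_ k
    exact (ENNReal.coe_lt_one_iff.2 (by exact_mod_cast hr1)).trans_le
      (one_le_radius_ordinaryHypergeometricSeries hc)
  have hsum_t (k : ℕ) : Summable fun n : ℕ => (n : ℝ) ^ k * C n * t ^ n := by
    refine .of_norm_bounded (hsum k) fun n => ?_
    rw [norm_mul, norm_mul, norm_pow, Real.norm_eq_abs, Real.norm_eq_abs, Real.norm_eq_abs,
      abs_pow, Nat.abs_cast]
    gcongr
  have heuler := ordinaryHypergeometric_euler_identity (a := a) (b := b) (t := t) hc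
    ((hsum_t 0).congr fun n => by ring).hasSum ((hsum_t 1).congr fun n => by ring).hasSum
    ((hsum_t 2).congr fun n => by ring).hasSum
  rw [hF, deriv_deriv_tsum_mul_pow (hsum 2) htr ht0,
    (hasDerivAt_tsum_mul_pow (by simpa using hsum 1) htr ht0).deriv]
  beta_reduce
  generalize ∑' n : ℕ, n * (n * C n) * t ^ n = S₂ at heuler ⊢
  generalize ∑' n : ℕ, n * C n * t ^ n = S₁ at heuler ⊢
  generalize ∑' n : ℕ, C n * t ^ n = S₀ at heuler ⊢
  field_simp
  linear_combination heuler

end Hypergeometric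

section RpowMulCompSq

variable {G : ℝ → ℝ} {μ x : ℝ}

theorem hasDerivAt_comp_sq (hG : DifferentiableAt ℝ G (x ^ 2)) :
    HasDerivAt (fun y => G (y ^ 2)) (2 * x * deriv G (x ^ 2)) x := by
  have hsq : HasDerivAt (fun y : ℝ => y ^ 2) (2 * x) x := by simpa using hasDerivAt_pow 2 x
  simpa [Function.comp_def] using
    HasDerivAt.scomp (h := fun y : ℝ => y ^ 2) x hG.hasDerivAt hsq

theorem hasDerivAt_rpow_mul_comp_sq (hx : 0 < x) (hG : DifferentiableAt ℝ G (x ^ 2)) :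
    HasDerivAt (fun y => y ^ μ * G (y ^ 2))
      (μ * x ^ (μ - 1) * G (x ^ 2) + x ^ μ * (2 * x * deriv G (x ^ 2))) x :=
  (Real.hasDerivAt_rpow_const (Or.inl hx.ne')).mul (hasDerivAt_comp_sq hG)

theorem deriv_rpow_mul_comp_sq_eventuallyEq (hx : 0 < x)
    (hG : ∀ᶠ s in 𝓝 (x ^ 2), DifferentiableAt ℝ G s) :
    deriv (fun y => y ^ μ * G (y ^ 2)) =ᶠ[𝓝 x]
      fun y => μ * y ^ (μ - 1) * G (y ^ 2) + y ^ μ * (2 * y * deriv G (y ^ 2)) := by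
  filter_upwards [lt_mem_nhds hx, ((continuous_pow 2).tendsto x).eventually hG] with y hy hGy
  exact (hasDerivAt_rpow_mul_comp_sq hy hGy).deriv

theorem hasDerivAt_deriv_rpow_mul_comp_sq (hx : 0 < x)
    (hG : ∀ᶠ s in 𝓝 (x ^ 2), DifferentiableAt ℝ G s)
    (hG' : DifferentiableAt ℝ (deriv G) (x ^ 2)) :
    HasDerivAt (deriv fun y => y ^ μ * G (y ^ 2))
      (μ * ((μ - 1) * x ^ (μ - 1 - 1) * G (x ^ 2) + x ^ (μ - 1) * (2 * x * deriv G (x ^ 2)))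
        + (μ * x ^ (μ - 1) * (2 * x * deriv G (x ^ 2))
          + x ^ μ * (2 * deriv G (x ^ 2) + 2 * x * (2 * x * deriv (deriv G) (x ^ 2))))) x := by
  refine HasDerivAt.congr_of_eventuallyEq ?_ (deriv_rpow_mul_comp_sq_eventuallyEq hx hG)
  have h₁ := (hasDerivAt_rpow_mul_comp_sq (μ := μ - 1) hx hG.self_of_nhds).const_mul μ
  have h₂ := (Real.hasDerivAt_rpow_const (p := μ) (Or.inl hx.ne')).mul
    (((hasDerivAt_id' x).const_mul 2).mul (hasDerivAt_comp_sq hG'))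
  convert h₁.add h₂ using 1
  · ext y
    simp only [Pi.add_apply, Pi.mul_apply]
    ring
  · simp only [Pi.mul_apply]
    ring

theorem heun_equation_of_gauss_equation {α β γ ε : ℝ} (hfuchs : 1 + α + β = γ + 2 * ε) (hx0 : 0 < x) (hx1 : x ≠ 1)
    (hG : ∀ᶠ s in 𝓝 (x ^ 2), DifferentiableAt ℝ G s)
    (hG' : DifferentiableAt ℝ (deriv G) (x ^ 2))
    (hgauss : x ^ 2 * (1 - x ^ 2) * deriv (deriv G) (x ^ 2)
      + ((3 - γ) / 2 - ((ε - α / 2) + (ε - β / 2) + 1) * x ^ 2) * deriv G (x ^ 2)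
      - (ε - α / 2) * (ε - β / 2) * G (x ^ 2) = 0)
    {w : ℝ → ℝ} (hw : ∀ y, w y = y ^ (1 - γ) * G (y ^ 2)) :
    DifferentiableAt ℝ w x ∧ DifferentiableAt ℝ (deriv w) x ∧
      deriv (deriv w) x + (γ / x + ε / (x - 1) + ε / (x + 1)) * deriv w x
        + α * β * x / (x * (x - 1) * (x + 1)) * w x = 0 := by
  obtain rfl : w = fun y => y ^ (1 - γ) * G (y ^ 2) := funext hw
  have hw₁ := hasDerivAt_rpow_mul_comp_sq (μ := 1 - γ) hx0 hG.self_of_nhds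
  have hw₂ := hasDerivAt_deriv_rpow_mul_comp_sq (μ := 1 - γ) hx0 hG hG'
  refine ⟨hw₁.differentiableAt, hw₂.differentiableAt, ?_⟩
  obtain rfl : γ = 1 + α + β - 2 * ε := by linarith
  have hx1' : x - 1 ≠ 0 := sub_ne_zero.2 hx1
  rw [hw₂.deriv, hw₁.deriv, Real.rpow_sub_one hx0.ne', Real.rpow_sub_one hx0.ne']
  field_simp
  linear_combination (-4 * x ^ 2 * x ^ (1 - (1 + α + β - 2 * ε))) * hgauss

end RpowMulCompSq

theorem heun_q_zero_second_solution_general (α β γ ε : ℝ) (hfuchs : 1 + α + β = γ + 2 * ε)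
    (hγ' : ∀ m : ℕ, (3 - γ) / 2 ≠ -(m : ℝ))
    (w : ℝ → ℝ)
    (hw : ∀ z : ℝ, w z = z ^ (1 - γ) * ∑' k : ℕ,
        ((ascPochhammer ℝ k).eval (ε - α / 2) * (ascPochhammer ℝ k).eval (ε - β / 2))
          / ((ascPochhammer ℝ k).eval ((3 - γ) / 2) * (k.factorial : ℝ)) * z ^ (2 * k)) :
    ∀ z ∈ Set.Ioo (0:ℝ) 1,
      DifferentiableAt ℝ w z ∧ DifferentiableAt ℝ (deriv w) z ∧
      deriv (deriv w) z + (γ / z + ε / (z - 1) + ε / (z + 1)) * deriv w z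
        + α * β * z / (z * (z - 1) * (z + 1)) * w z = 0 := by
  rintro z ⟨hz0, hz1⟩
  have hz2 : |z ^ 2| < 1 := by
    rw [abs_of_pos (by positivity)]
    nlinarith
  have hF := analyticAt_ordinaryHypergeometric (a := ε - α / 2) (b := ε - β / 2) hγ' hz2
  exact heun_equation_of_gauss_equation hfuchs hz0 hz1.ne
    (hF.eventually_analyticAt.mono fun _ h => h.differentiableAt) hF.deriv.differentiableAt
    (ordinaryHypergeometric_ode hγ' (by positivity) hz2)
    fun y => by rw [hw, ordinaryHypergeometric_sq_eq_tsum]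

/-- Let `α, β, γ, ε` be real satisfying the Fuchsian condition `1 + α + β = γ + 2ε`, with
`γ < 3` and `(3−γ)/2` not a nonpositive integer.  Define
`w(z) = z^(1−γ) Σ_k (ε−α/2)_k (ε−β/2)_k / (((3−γ)/2)_k k!) z^(2k)` (the second fundamental
solution `z^(1−γ) ₂F₁(ε−α/2, ε−β/2; (3−γ)/2; z²)` at the exponent `1−γ` of `z = 0`).
Then for every `z ∈ (0,1)`, `w` satisfies the general Heun equation with `a = −1`, `q = 0`,
`δ = ε`: `w'' + (γ/z + ε/(z−1) + ε/(z+1)) w' + αβ z/(z(z−1)(z+1)) w = 0`. -/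
theorem heun_q_zero_second_solution (α β γ ε : ℝ) (hfuchs : 1 + α + β = γ + 2 * ε)
    (hγ : γ < 3) (hγ' : ∀ m : ℕ, (3 - γ) / 2 ≠ -(m : ℝ))
    (w : ℝ → ℝ)
    (hw : ∀ z : ℝ, w z = z ^ (1 - γ) * ∑' k : ℕ,
        ((ascPochhammer ℝ k).eval (ε - α / 2) * (ascPochhammer ℝ k).eval (ε - β / 2))
          / ((ascPochhammer ℝ k).eval ((3 - γ) / 2) * (k.factorial : ℝ)) * z ^ (2 * k)) :
    ∀ z ∈ Set.Ioo (0:ℝ) 1,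
      DifferentiableAt ℝ w z ∧ DifferentiableAt ℝ (deriv w) z ∧
      deriv (deriv w) z + (γ / z + ε / (z - 1) + ε / (z + 1)) * deriv w z
        + α * β * z / (z * (z - 1) * (z + 1)) * w z = 0 :=
  heun_q_zero_second_solution_general α β γ ε hfuchs hγ' w hw
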